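/- arXiv:1712.00744 — 2 statements merged into one kernel-verified Lean document; each statement's English description precedes it below -/
import Mathlib

section
/- Let I be a quaternionic imaginary unit (I² = −1) and let P ∈ ℍ[X] have degree ≥ 2 with all coefficients in the complex plane C_I = ℝ + ℝI. Then P is a Gauss-Lucas polynomial; that is, V(P') ⊆ K(N(P)). -/
open Polynomial
open scoped Classical RealInnerProductSpace ENNReal

noncomputable section

abbrev Hq : Type := Quaternion ℝ

/-- Right evaluation of a quaternionic polynomial: `P(x) = ∑ x^k * a_k`. -/
def evalQ (P : Hq[X]) (x : Hq) : Hq := P.sum fun k a => x ^ k * a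

/-- Zero set of a quaternionic polynomial (w.r.t. right evaluation). -/
def VQ (P : Hq[X]) : Set Hq := {x | evalQ P x = 0}

/-- Conjugate polynomial: coefficients conjugated. -/
def conjPoly (P : Hq[X]) : Hq[X] := P.sum fun k a => C (star a) * X ^ k

/-- Normal polynomial `N(P) = P * Pᶜ`. -/
def normalPoly (P : Hq[X]) : Hq[X] := P * conjPoly P

/-- The conjugacy sphere `S_x = {p x p⁻¹ : p ≠ 0}`. -/
def sphereOf (x : Hq) : Set Hq := {y | ∃ p : Hq, p ≠ 0 ∧ y = p * x * p⁻¹}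

/-- `P` is a Gauss-Lucas polynomial: `V(P') ⊆ K(N(P))`. -/
def GaussLucas (P : Hq[X]) : Prop :=
  VQ (derivative P) ⊆ convexHull ℝ (VQ (normalPoly P))

/-- The sphere of imaginary units. -/
def sphereS : Set Hq := {I | I ^ 2 = -1}

/-- The complex plane `C_I = ℝ + ℝI`. -/
def Cplane (I : Hq) : Set Hq := {x | ∃ a b : ℝ, x = algebraMap ℝ Hq a + b • I}

/-- Orthogonal projection onto `C_I`: `π_I(a) = ⟪a,1⟫•1 + ⟪a,I⟫•I`. -/
def piProj (I a : Hq) : Hq := (@inner ℝ Hq _ a (1 : Hq)) • (1 : Hq) + (@inner ℝ Hq _ a I) • I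

/-- The polynomial `P^I` with coefficients projected onto `C_I`. -/
def projPoly (I : Hq) (P : Hq[X]) : Hq[X] := P.sum fun k a => C (piProj I a) * X ^ k

/-- `K_{C_I}(Q)`: the convex hull in `C_I` of `V(Q) ∩ C_I` if the restriction of `Q`
to `C_I` is nonconstant, and `C_I` itself otherwise. -/
def KC (I : Hq) (Q : Hq[X]) : Set Hq :=
  if ∃ c, ∀ x ∈ Cplane I, evalQ Q x = c then Cplane I
  else convexHull ℝ (VQ Q ∩ Cplane I)

/-- The Gauss-Lucas snail `sn(P) = ⋃_{I ∈ S} K_{C_I}(P^I)`. -/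
def snail (P : Hq[X]) : Set Hq := ⋃ I ∈ sphereS, KC I (projPoly I P)

/-- The Cauchy bound `C(P) = |a_d|⁻¹ √(∑ |a_k|²)`. -/
def CQ (P : Hq[X]) : ℝ :=
  ‖P.leadingCoeff‖⁻¹ * Real.sqrt (∑ k ∈ Finset.range (P.natDegree + 1), ‖P.coeff k‖ ^ 2)

/-- Extended Cauchy bound, `+∞` on constant polynomials. -/
def CExt (P : Hq[X]) : ℝ≥0∞ :=
  if P.natDegree = 0 then ⊤ else ENNReal.ofReal (CQ P)

def qi : Hq := ⟨0, 1, 0, 0⟩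
def qj : Hq := ⟨0, 0, 1, 0⟩
def qk : Hq := ⟨0, 0, 0, 1⟩

/-- Polynomial with coefficient tuple `a`. -/
def polyOf {n : ℕ} (a : Fin (n + 1) → Hq) : Hq[X] :=
  ∑ k : Fin (n + 1), C (a k) * X ^ (k : ℕ)

lemma evalQ_add (P Q : Hq[X]) (x : Hq) : evalQ (P + Q) x = evalQ P x + evalQ Q x :=
  Polynomial.sum_add_index P Q _ (by simp) (by intros; rw [mul_add])

lemma evalQ_monomial (n : ℕ) (a : Hq) (x : Hq) : evalQ (monomial n a) x = x ^ n * a :=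
  Polynomial.sum_monomial_index a _ (by simp)

lemma evalQ_realmap (m : ℝ[X]) (x : Hq) :
    evalQ (m.map (algebraMap ℝ Hq)) x = Polynomial.aeval x m := by
  induction m using Polynomial.induction_on' with
  | add p q hp hq => rw [Polynomial.map_add, evalQ_add, hp, hq, map_add]
  | monomial n a =>
      rw [Polynomial.map_monomial, evalQ_monomial, Polynomial.aeval_monomial,
        Algebra.commutes]

variable {I K : Hq}

local notation "θ" => Complex.liftAux (A := Hq)

lemma theta_real (hI : I * I = -1) (r : ℝ) : θ I hI (r : ℂ) = algebraMap ℝ Hq r := by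
  rw [Complex.liftAux_apply]; simp

lemma theta_smul (hI : I * I = -1) (r : ℝ) (c : ℂ) :
    θ I hI ((r : ℂ) * c) = r • θ I hI c := by
  rw [map_mul, theta_real, Algebra.smul_def]

/-- Key evaluation formula: evaluating a `C_I` polynomial at a point of `C_K`. -/
lemma evalQ_key (hI : I * I = -1) (hK : K * K = -1) (q : ℂ[X]) (z : ℂ) :
    evalQ (q.map (θ I hI).toRingHom) (θ K hK z) =
      θ I hI ((q.eval z + q.eval ((starRingEnd ℂ) z)) / 2)
        + K * θ I hI ((q.eval z - q.eval ((starRingEnd ℂ) z)) / (2 * Complex.I)) := by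
  induction q using Polynomial.induction_on' with
  | add p q hp hq =>
      rw [Polynomial.map_add, evalQ_add, hp, hq]
      simp only [eval_add]
      rw [show (p.eval z + q.eval z + (p.eval ((starRingEnd ℂ) z) + q.eval ((starRingEnd ℂ) z))) / 2
          = (p.eval z + p.eval ((starRingEnd ℂ) z)) / 2 + (q.eval z + q.eval ((starRingEnd ℂ) z)) / 2 by ring,
        show (p.eval z + q.eval z - (p.eval ((starRingEnd ℂ) z) + q.eval ((starRingEnd ℂ) z))) / (2 * Complex.I)
          = (p.eval z - p.eval ((starRingEnd ℂ) z)) / (2 * Complex.I)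
            + (q.eval z - q.eval ((starRingEnd ℂ) z)) / (2 * Complex.I) by ring,
        map_add, map_add, mul_add]
      abel
  | monomial n a =>
      rw [Polynomial.map_monomial, evalQ_monomial, eval_monomial, eval_monomial]
      have hconj : (starRingEnd ℂ) z ^ n = (starRingEnd ℂ) (z ^ n) := by rw [map_pow]
      have h1 : (a * z ^ n + a * (starRingEnd ℂ) z ^ n) / 2 = (((z ^ n).re : ℂ)) * a := by
        rw [hconj, div_eq_iff (two_ne_zero), ← mul_add, Complex.add_conj]
        push_cast; ring
      have h2 : (a * z ^ n - a * (starRingEnd ℂ) z ^ n) / (2 * Complex.I) = (((z ^ n).im : ℂ)) * a := by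
        rw [hconj, div_eq_iff (by simp [Complex.I_ne_zero] : (2 : ℂ) * Complex.I ≠ 0), ← mul_sub,
          Complex.sub_conj]
        push_cast; ring
      rw [h1, h2, theta_smul, theta_smul]
      have hx : (θ K hK z) ^ n = θ K hK (z ^ n) := (map_pow _ _ _).symm
      rw [hx, Complex.liftAux_apply]
      rw [add_mul]
      simp only [AlgHom.toRingHom_eq_coe, RingHom.coe_coe, ← Algebra.smul_def,
        smul_mul_assoc, mul_smul_comm]

lemma evalQ_map_self (hI : I * I = -1) (q : ℂ[X]) (z : ℂ) :
    evalQ (q.map (θ I hI).toRingHom) (θ I hI z) = θ I hI (q.eval z) := by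
  rw [evalQ_key hI hI q z]
  have hIm : ∀ B : ℂ, I * θ I hI B = θ I hI (Complex.I * B) := fun B => by
    rw [map_mul, Complex.liftAux_apply_I]
  rw [hIm, ← map_add]
  congr 1
  field_simp
  ring

/-- Every quaternion lies on some complex slice. -/
lemma exists_decomp (x : Hq) (hI : I * I = -1) :
    ∃ (K : Hq) (hK : K * K = -1) (z : ℂ), x = θ K hK z := by
  by_cases hv : x.im = 0
  · refine ⟨I, hI, (x.re : ℂ), ?_⟩
    rw [Complex.liftAux_apply]
    simp only [Complex.ofReal_re, Complex.ofReal_im, zero_smul, add_zero]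
    conv_lhs => rw [← Quaternion.re_add_im x]
    rw [hv, add_zero]; rfl
  · set v := x.im with hvdef
    have hvn : ‖v‖ ≠ 0 := norm_ne_zero_iff.mpr hv
    refine ⟨‖v‖⁻¹ • v, ?_, ⟨x.re, ‖v‖⟩, ?_⟩
    · have hvv : v * v = -((‖v‖ * ‖v‖ : ℝ) : Hq) := by
        have h1 : star v = -v := Quaternion.star_eq_neg.mpr (Quaternion.re_im x)
        have h2 : v * star v = ((Quaternion.normSq v : ℝ) : Hq) := Quaternion.self_mul_star v
        rw [h1, mul_neg] at h2
        rw [← Quaternion.normSq_eq_norm_mul_self]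
        exact neg_eq_iff_eq_neg.mp h2
      rw [smul_mul_smul_comm, hvv, smul_neg, Quaternion.smul_coe,
        show ‖v‖⁻¹ * ‖v‖⁻¹ * (‖v‖ * ‖v‖) = 1 from by field_simp]
      simp
    · rw [Complex.liftAux_apply]
      show x = algebraMap ℝ Hq x.re + ‖v‖ • ‖v‖⁻¹ • v
      rw [smul_smul, mul_inv_cancel₀ hvn, one_smul]
      have : algebraMap ℝ Hq x.re = (x.re : Hq) := rfl
      rw [this, Quaternion.re_add_im]

lemma theta_inj (hI : I * I = -1) : Function.Injective (θ I hI) :=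
  (θ I hI).toRingHom.injective

lemma liftAux_eq_of_eq {K K' : Hq} (hK : K * K = -1) (hK' : K' * K' = -1) (h : K = K') :
    θ K hK = θ K' hK' := by subst h; rfl

lemma liftAux_neg (hI : I * I = -1) (h : (-I) * (-I) = -1) (z : ℂ) :
    θ (-I) h z = θ I hI ((starRingEnd ℂ) z) := by
  rw [Complex.liftAux_apply, Complex.liftAux_apply]
  simp [smul_neg]

/-- Structure of zeros of a `C_I` polynomial: every zero has a representative on `C_I`. -/
lemma roots_structure (hI : I * I = -1) (q : ℂ[X]) (x : Hq)
    (hx : evalQ (q.map (θ I hI).toRingHom) x = 0) :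
    ∃ (z : ℂ) (K : Hq) (hK : K * K = -1), x = θ K hK z ∧ q.eval z = 0 := by
  obtain ⟨K, hK, z, rfl⟩ := exists_decomp x hI
  have hx0 := hx
  rw [evalQ_key hI hK q z] at hx
  set A := (q.eval z + q.eval ((starRingEnd ℂ) z)) / 2 with hA
  set B := (q.eval z - q.eval ((starRingEnd ℂ) z)) / (2 * Complex.I) with hB
  by_cases hB0 : B = 0
  · rw [hB0, map_zero, mul_zero, add_zero] at hx
    have hA0 : A = 0 := theta_inj hI (by rw [hx, map_zero])
    refine ⟨z, K, hK, rfl, ?_⟩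
    have h1 : q.eval z - q.eval ((starRingEnd ℂ) z) = 0 := by
      have := hB0
      rw [hB, _root_.div_eq_zero_iff] at this
      rcases this with h | h
      · exact h
      · exact absurd h (by simp [Complex.I_ne_zero])
    have h2 : q.eval z + q.eval ((starRingEnd ℂ) z) = 0 := by
      have := hA0
      rw [hA, _root_.div_eq_zero_iff] at this
      rcases this with h | h
      · exact h
      · exact absurd h two_ne_zero
    linear_combination (h1 + h2) / 2
  · have hθB : θ I hI B ≠ 0 := fun h => hB0 (theta_inj hI (by rw [h, map_zero]))
    have hKeq : K = θ I hI (-A * B⁻¹) := by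
      have h1 : K * θ I hI B = θ I hI (-A) := by
        rw [map_neg]; exact eq_neg_of_add_eq_zero_right hx
      rw [map_mul, map_inv₀, eq_mul_inv_iff_mul_eq₀ hθB]
      exact h1
    have hw : (-A * B⁻¹) * (-A * B⁻¹) = -1 := by
      apply theta_inj hI
      rw [map_mul, ← hKeq, map_neg, map_one, hK]
    have hcases : -A * B⁻¹ = Complex.I ∨ -A * B⁻¹ = -Complex.I := by
      have hfac : (-A * B⁻¹ - Complex.I) * (-A * B⁻¹ + Complex.I) = 0 := by
        linear_combination hw - Complex.I_sq
      rcases mul_eq_zero.mp hfac with h | h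
      · left; exact sub_eq_zero.mp h
      · right; exact eq_neg_of_add_eq_zero_left h
    rcases hcases with h | h
    · have hKI : K = I := by rw [hKeq, h, Complex.liftAux_apply_I]
      rw [liftAux_eq_of_eq hK hI hKI] at hx0 ⊢
      rw [evalQ_map_self hI q z] at hx0
      exact ⟨z, I, hI, rfl, theta_inj hI (by rw [hx0, map_zero])⟩
    · have hnI : (-I) * (-I) = -1 := by rw [neg_mul_neg]; exact hI
      have hKI : K = -I := by
        rw [hKeq, h, map_neg, Complex.liftAux_apply_I]
      rw [liftAux_eq_of_eq hK hnI hKI, liftAux_neg hI hnI z] at hx0 ⊢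
      rw [evalQ_map_self hI q _] at hx0
      exact ⟨(starRingEnd ℂ) z, I, hI, rfl, theta_inj hI (by rw [hx0, map_zero])⟩

lemma deriv_prod_eval (z : ℂ) (R : Multiset ℂ) (hz : ∀ r ∈ R, z ≠ r) :
    eval z (derivative (R.map (fun r => X - C r)).prod) =
      eval z (R.map (fun r => X - C r)).prod * (R.map fun r => (z - r)⁻¹).sum := by
  induction R using Multiset.induction_on with
  | empty => simp
  | cons r R ih =>
      have hzr : z - r ≠ 0 := sub_ne_zero.mpr (hz r (Multiset.mem_cons_self r R))
      simp only [Multiset.map_cons, Multiset.prod_cons, Multiset.sum_cons, derivative_mul,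
        derivative_X_sub_C, eval_add, eval_mul, eval_sub, eval_X, eval_C, one_mul]
      rw [ih (fun s hs => hz s (Multiset.mem_cons_of_mem hs))]
      field_simp

lemma multiset_sum_fin {M : Type*} [AddCommMonoid M] (R : Multiset ℂ) (f : ℂ → M) :
    (R.map f).sum = ∑ i : Fin R.toList.length, f (R.toList.get i) := by
  conv_lhs => rw [← Multiset.coe_toList R]
  rw [Multiset.map_coe, Multiset.sum_coe, ← List.ofFn_getElem_eq_map, List.sum_ofFn]
  rfl

lemma gauss_lucas_complex (p : ℂ[X]) (hp : 0 < p.natDegree) (z : ℂ)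
    (hz : eval z (derivative p) = 0) : z ∈ convexHull ℝ {w : ℂ | eval w p = 0} := by
  by_cases hzp : eval z p = 0
  · exact subset_convexHull ℝ _ hzp
  have hsplit : p.Splits := IsAlgClosed.splits p
  have hprod := hsplit.eq_prod_roots
  set R := p.roots with hR
  have hroot : ∀ r ∈ R, eval r p = 0 := fun r hr => isRoot_of_mem_roots hr
  have hzR : ∀ r ∈ R, z ≠ r := by
    rintro r hr rfl; exact hzp (hroot _ hr)
  have hkey : (R.map fun r => (z - r)⁻¹).sum = 0 := by
    have hd : eval z (derivative p) = eval z p * (R.map fun r => (z - r)⁻¹).sum := by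
      conv_lhs => rw [hprod]
      rw [derivative_C_mul, eval_mul, eval_C, deriv_prod_eval z R hzR]
      conv_rhs => rw [hprod]
      rw [eval_mul, eval_C]; ring
    rw [hd] at hz
    exact (mul_eq_zero.mp hz).resolve_left hzp
  -- switch to indexed sums
  set l := R.toList with hl
  set n := l.length with hn
  have hnpos : 0 < n := by
    have hcard : p.natDegree = Multiset.card R := by
      exact hsplit.natDegree_eq_card_roots
    rw [hn, hl, Multiset.length_toList, ← hcard]
    exact hp
  haveI : Nonempty (Fin n) := ⟨⟨0, hnpos⟩⟩
  set g : Fin n → ℂ := l.get with hg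
  have hgR : ∀ i, g i ∈ R := fun i => Multiset.mem_toList.mp (l.get_mem _)
  have hkey2 : ∑ i : Fin n, (z - g i)⁻¹ = 0 := by
    rw [← multiset_sum_fin R (fun r => (z - r)⁻¹)]; exact hkey
  set w : Fin n → ℝ := fun i => (Complex.normSq (z - g i))⁻¹ with hw
  have hne : ∀ i, z - g i ≠ 0 := fun i => sub_ne_zero.mpr (hzR _ (hgR i))
  have hwpos : ∀ i, 0 < w i := fun i =>
    inv_pos.mpr (Complex.normSq_pos.mpr (hne i))
  have hconj : ∑ i : Fin n, (w i : ℂ) * (z - g i) = 0 := by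
    have := congrArg (starRingEnd ℂ) hkey2
    rw [map_sum, map_zero] at this
    rw [← this]
    refine Finset.sum_congr rfl fun i _ => ?_
    rw [map_inv₀, Complex.inv_def, Complex.normSq_conj, Complex.conj_conj, mul_comm]
  have hT : (0 : ℝ) < ∑ i : Fin n, w i :=
    Finset.sum_pos (fun i _ => hwpos i) Finset.univ_nonempty
  have hcm : z = Finset.univ.centerMass w g := by
    have hsum : (∑ i : Fin n, w i) • z = ∑ i : Fin n, w i • g i := by
      have h1 : ∑ i : Fin n, ((w i : ℂ) * z - (w i : ℂ) * g i) = 0 := by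
        rw [← hconj]; refine Finset.sum_congr rfl fun i _ => by ring
      rw [Finset.sum_sub_distrib] at h1
      have h2 : ∑ i : Fin n, (w i : ℂ) * z = ∑ i : Fin n, (w i : ℂ) * g i :=
        sub_eq_zero.mp h1
      calc (∑ i : Fin n, w i) • z = ∑ i : Fin n, w i • z := by rw [Finset.sum_smul]
        _ = ∑ i : Fin n, (w i : ℂ) * z := by
            refine Finset.sum_congr rfl fun i _ => Complex.real_smul
        _ = ∑ i : Fin n, (w i : ℂ) * g i := h2
        _ = ∑ i : Fin n, w i • g i := by
            refine Finset.sum_congr rfl fun i _ => Complex.real_smul.symm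
    rw [Finset.centerMass, ← hsum, smul_smul, inv_mul_cancel₀ hT.ne', one_smul]
  rw [hcm]
  exact Finset.centerMass_mem_convexHull _ (fun i _ => (hwpos i).le) hT
    (fun i _ => hroot _ (hgR i))

lemma conjPoly_coeff (P : Hq[X]) (n : ℕ) : (conjPoly P).coeff n = star (P.coeff n) := by
  classical
  simp only [conjPoly, Polynomial.sum, finset_sum_coeff, coeff_C_mul, coeff_X_pow, mul_ite,
    mul_one, mul_zero]
  rw [Finset.sum_ite_eq]
  by_cases h : n ∈ P.support
  · simp [h]
  · simp [h, Polynomial.notMem_support_iff.mp h]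

lemma I_re_zero (hI : I * I = -1) : I.re = 0 := by
  have h1 := congrArg QuaternionAlgebra.imI hI
  have h4 := congrArg QuaternionAlgebra.re hI
  simp only [Quaternion.imI_mul, Quaternion.re_mul, Quaternion.re_neg, Quaternion.re_one,
    Quaternion.imI_neg, Quaternion.imI_one, neg_zero] at h1 h4
  by_contra h
  have himI : I.imI = 0 := by
    have : I.re * I.imI = 0 := by linarith
    exact (mul_eq_zero.mp this).resolve_left h
  have h2 := congrArg QuaternionAlgebra.imJ hI
  have h3 := congrArg QuaternionAlgebra.imK hI
  simp only [Quaternion.imJ_mul, Quaternion.imK_mul, Quaternion.imJ_neg, Quaternion.imJ_one,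
    Quaternion.imK_neg, Quaternion.imK_one, neg_zero] at h2 h3
  have himJ : I.imJ = 0 := by
    have : I.re * I.imJ = 0 := by linarith [mul_comm I.imJ I.re]
    exact (mul_eq_zero.mp this).resolve_left h
  have himK : I.imK = 0 := by
    have : I.re * I.imK = 0 := by linarith [mul_comm I.imK I.re]
    exact (mul_eq_zero.mp this).resolve_left h
  nlinarith [mul_self_nonneg I.re]

lemma star_theta (hI : I * I = -1) (c : ℂ) :
    star (θ I hI c) = θ I hI ((starRingEnd ℂ) c) := by
  have hsI : star I = -I := Quaternion.star_eq_neg.mpr (I_re_zero hI)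
  rw [Complex.liftAux_apply, Complex.liftAux_apply, star_add, Quaternion.star_smul, hsI]
  simp [smul_neg]

lemma conjPoly_map (hI : I * I = -1) (p : ℂ[X]) :
    conjPoly (p.map (θ I hI).toRingHom) = (p.map (starRingEnd ℂ)).map (θ I hI).toRingHom := by
  apply Polynomial.ext; intro n
  rw [conjPoly_coeff, coeff_map, coeff_map, coeff_map]
  exact star_theta hI _

lemma normalPoly_real (hI : I * I = -1) (p : ℂ[X]) :
    ∃ m : ℝ[X], m.map (algebraMap ℝ ℂ) = p * p.map (starRingEnd ℂ) ∧
      normalPoly (p.map (θ I hI).toRingHom) = m.map (algebraMap ℝ Hq) := by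
  set q := p * p.map (starRingEnd ℂ) with hqdef
  have hconj : q.map (starRingEnd ℂ) = q := by
    rw [hqdef, Polynomial.map_mul, Polynomial.map_map,
      show (starRingEnd ℂ).comp (starRingEnd ℂ) = RingHom.id ℂ from
        RingHom.ext fun z => Complex.conj_conj z,
      Polynomial.map_id, mul_comm]
  have hcoef : ∀ n, q.coeff n ∈ Set.range (algebraMap ℝ ℂ) := by
    intro n
    have h : (starRingEnd ℂ) (q.coeff n) = q.coeff n := by
      conv_rhs => rw [← hconj]
      rw [coeff_map]
    exact ⟨(q.coeff n).re, Complex.conj_eq_iff_re.mp h⟩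
  obtain ⟨m, hm⟩ := (Polynomial.mem_lifts q).mp ((Polynomial.lifts_iff_coeff_lifts q).mpr hcoef)
  refine ⟨m, hm, ?_⟩
  rw [normalPoly, conjPoly_map hI p, ← Polynomial.map_mul, ← hqdef, ← hm,
    Polynomial.map_map]
  congr 1
  exact (θ I hI).comp_algebraMap

lemma evalQ_normal_zero (hI : I * I = -1) (hK : K * K = -1) (p : ℂ[X]) (w : ℂ)
    (hw : eval w p = 0) : evalQ (normalPoly (p.map (θ I hI).toRingHom)) (θ K hK w) = 0 := by
  obtain ⟨m, hm1, hm2⟩ := normalPoly_real hI p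
  rw [hm2, evalQ_realmap]
  rw [Polynomial.aeval_algHom_apply (θ K hK) w m]
  have : (Polynomial.aeval w) m = 0 := by
    rw [Polynomial.aeval_def, ← Polynomial.eval_map, hm1, eval_mul, hw, zero_mul]
  rw [this, map_zero]


theorem stmt8' {I : Hq} (hI : I ^ 2 = -1) (P : Hq[X]) (hdeg : 2 ≤ P.natDegree)
    (hcoeff : ∀ k, ∃ a b : ℝ, P.coeff k = algebraMap ℝ Hq a + b • I) :
    {x | evalQ (derivative P) x = 0} ⊆
      convexHull ℝ {x | evalQ (normalPoly P) x = 0} := by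
  have hI' : I * I = -1 := by rwa [pow_two] at hI
  intro x hx
  have hrange : ∀ k, P.coeff k ∈ Set.range (θ I hI').toRingHom := by
    intro k
    obtain ⟨a, b, hab⟩ := hcoeff k
    refine ⟨⟨a, b⟩, ?_⟩
    simp only [AlgHom.toRingHom_eq_coe, RingHom.coe_coe]
    rw [hab, Complex.liftAux_apply]
  obtain ⟨p, hp⟩ := (Polynomial.mem_lifts P).mp
    ((Polynomial.lifts_iff_coeff_lifts P).mpr hrange)
  have hinj : Function.Injective (θ I hI').toRingHom := (θ I hI').toRingHom.injective
  have hdegp : 2 ≤ p.natDegree := by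
    rwa [← hp, Polynomial.natDegree_map_eq_of_injective hinj] at hdeg
  have hx' : evalQ ((derivative p).map (θ I hI').toRingHom) x = 0 := by
    rw [← Polynomial.derivative_map, hp]; exact hx
  obtain ⟨z, K, hK, rfl, hz⟩ := roots_structure hI' (derivative p) x hx'
  have hGL : z ∈ convexHull ℝ {w : ℂ | eval w p = 0} :=
    gauss_lucas_complex p (by omega) z hz
  have himg : θ K hK z ∈ convexHull ℝ ((θ K hK) '' {w : ℂ | eval w p = 0}) := by
    have h := (θ K hK).toLinearMap.image_convexHull {w : ℂ | eval w p = 0}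
    have h2 : (θ K hK) '' (convexHull ℝ {w : ℂ | eval w p = 0})
        = convexHull ℝ ((θ K hK) '' {w : ℂ | eval w p = 0}) := h
    rw [← h2]
    exact Set.mem_image_of_mem _ hGL
  have hsub : (θ K hK) '' {w : ℂ | eval w p = 0} ⊆ {x | evalQ (normalPoly P) x = 0} := by
    rintro _ ⟨w, hw, rfl⟩
    show evalQ (normalPoly P) (θ K hK w) = 0
    rw [← hp]
    exact evalQ_normal_zero hI' hK p w hw
  exact convexHull_mono hsub himg

theorem stmt8 (I : Hq) (hI : I ^ 2 = -1) (P : Hq[X]) (hdeg : 2 ≤ P.natDegree)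
    (hcoeff : ∀ k, P.coeff k ∈ Cplane I) :
    GaussLucas P := by
  show VQ (derivative P) ⊆ convexHull ℝ (VQ (normalPoly P))
  have hcoeff' : ∀ k, ∃ a b : ℝ, P.coeff k = algebraMap ℝ Hq a + b • I := hcoeff
  exact stmt8' hI P hdeg hcoeff'

end
end

section
/- (Quaternionic Gauss-Lucas Theorem.) For every quaternionic polynomial P ∈ ℍ[X] of degree ≥ 2, the zero set of the derivative is contained in the Gauss-Lucas snail of P: V(P') ⊆ sn(P). -/
open Polynomial
open scoped Classical RealInnerProductSpace ENNReal

noncomputable section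

-- basic quaternion lemmas, to append to defs
section Quat
variable {I : Hq} (hI : I ^ 2 = -1)

lemma re_eq_zero_of_sq (hI : I ^ 2 = -1) : I.re = 0 := by
  have h := hI
  rw [sq, Quaternion.ext_iff] at h
  obtain ⟨h1, h2, h3, h4⟩ := h
  simp only [Quaternion.re_mul, Quaternion.imI_mul, Quaternion.imJ_mul, Quaternion.imK_mul,
    Quaternion.re_neg, Quaternion.imI_neg, Quaternion.imJ_neg, Quaternion.imK_neg,
    Quaternion.re_one, Quaternion.imI_one, Quaternion.imJ_one, Quaternion.imK_one,
    neg_zero] at h1 h2 h3 h4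
  nlinarith [sq_nonneg I.re, sq_nonneg I.imI, sq_nonneg I.imJ, sq_nonneg I.imK]

lemma star_eq_neg_of_sq (hI : I ^ 2 = -1) : star I = -I := by
  have h := re_eq_zero_of_sq hI
  ext <;> simp [h]

lemma re_mul_comm (a b : Hq) : (a * b).re = (b * a).re := by
  simp only [Quaternion.re_mul]; ring

lemma inner_one (a : Hq) : ⟪a, (1:Hq)⟫ = a.re := by
  rw [Quaternion.inner_def, star_one, mul_one]

lemma inner_I (hI : I ^ 2 = -1) (a : Hq) : ⟪a, I⟫ = -(a * I).re := by
  rw [Quaternion.inner_def, star_eq_neg_of_sq hI, mul_neg, Quaternion.re_neg]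

lemma piProj_I_mul (hI : I ^ 2 = -1) (a : Hq) : piProj I (I * a) = I * piProj I a := by
  have hII : I * I = -1 := by rw [← sq]; exact hI
  rw [piProj, piProj, inner_one, inner_one, inner_I hI, inner_I hI]
  have h1 : (I * a).re = (a * I).re := re_mul_comm I a
  have h2 : (I * a * I).re = -a.re := by
    rw [re_mul_comm, ← mul_assoc, hII]
    simp
  rw [h1, h2, mul_add, mul_smul_comm, mul_smul_comm, mul_one, hII]
  module

lemma piProj_smul (I : Hq) (r : ℝ) (a : Hq) : piProj I (r • a) = r • piProj I a := by
  simp only [piProj, inner_smul_left, RCLike.conj_to_real, smul_add, smul_smul]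

lemma piProj_add (I : Hq) (a b : Hq) : piProj I (a + b) = piProj I a + piProj I b := by
  simp only [piProj, inner_add_left, add_smul]
  abel

def piProjL (I : Hq) : Hq →ₗ[ℝ] Hq where
  toFun := piProj I
  map_add' := piProj_add I
  map_smul' := piProj_smul I

lemma piProj_zero (I : Hq) : piProj I 0 = 0 := (piProjL I).map_zero

lemma piProj_mul_left (hI : I ^ 2 = -1) {x : Hq} (hx : x ∈ Cplane I) (a : Hq) :
    piProj I (x * a) = x * piProj I a := by
  obtain ⟨s, t, rfl⟩ := hx
  have hs : (algebraMap ℝ Hq s) * a = s • a := by rw [Algebra.smul_def]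
  rw [add_mul, hs, smul_mul_assoc, piProj_add, piProj_smul, piProj_smul, piProj_I_mul hI,
    add_mul, smul_mul_assoc, ← Algebra.smul_def]

end Quat

section Poly

lemma evalQ_range (R : Hq[X]) (x : Hq) (n : ℕ) (hn : R.natDegree < n) :
    evalQ R x = ∑ k ∈ Finset.range n, x ^ k * R.coeff k :=
  Polynomial.sum_over_range' R (fun _ => mul_zero _) n hn

lemma projPoly_eq (I : Hq) (R : Hq[X]) :
    projPoly I R = ∑ k ∈ Finset.range (R.natDegree + 1),
      C (piProj I (R.coeff k)) * X ^ k := by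
  refine Polynomial.sum_over_range' R (fun n => ?_) _ (lt_add_one _)
  rw [piProj_zero, map_zero, zero_mul]

lemma coeff_projPoly (I : Hq) (R : Hq[X]) (j : ℕ) :
    (projPoly I R).coeff j = piProj I (R.coeff j) := by
  rw [projPoly_eq]
  simp only [finset_sum_coeff, coeff_C_mul, coeff_X_pow, mul_ite, mul_one, mul_zero]
  rw [Finset.sum_ite_eq (Finset.range (R.natDegree + 1)) j]
  by_cases h : j ∈ Finset.range (R.natDegree + 1)
  · rw [if_pos h]
  · have hj : R.natDegree < j := by simp only [Finset.mem_range] at h; omega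
    rw [if_neg h, R.coeff_eq_zero_of_natDegree_lt hj, piProj_zero]

lemma natDegree_projPoly_le (I : Hq) (R : Hq[X]) :
    (projPoly I R).natDegree ≤ R.natDegree := by
  refine Polynomial.natDegree_le_iff_coeff_eq_zero.2 fun m hm => ?_
  rw [coeff_projPoly, R.coeff_eq_zero_of_natDegree_lt hm, piProj_zero]

/-- pullback of the projected coefficients to `ℂ`. -/
def gQ (I : Hq) (a : Hq) : ℂ := ⟨⟪a, (1:Hq)⟫, ⟪a, I⟫⟩

lemma gQ_zero (I : Hq) : gQ I 0 = 0 := by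
  simp [gQ, Complex.ext_iff]

lemma gQ_smul (I : Hq) (r : ℝ) (a : Hq) : gQ I (r • a) = (r : ℂ) * gQ I a := by
  simp [gQ, Complex.ext_iff, inner_smul_left]

def qPoly (I : Hq) (R : Hq[X]) : ℂ[X] :=
  ∑ k ∈ Finset.range (R.natDegree + 1), C (gQ I (R.coeff k)) * X ^ k

lemma coeff_qPoly (I : Hq) (R : Hq[X]) (j : ℕ) :
    (qPoly I R).coeff j = gQ I (R.coeff j) := by
  rw [qPoly]
  simp only [finset_sum_coeff, coeff_C_mul, coeff_X_pow, mul_ite, mul_one, mul_zero]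
  rw [Finset.sum_ite_eq (Finset.range (R.natDegree + 1)) j]
  by_cases h : j ∈ Finset.range (R.natDegree + 1)
  · rw [if_pos h]
  · have hj : R.natDegree < j := by simp only [Finset.mem_range] at h; omega
    rw [if_neg h, R.coeff_eq_zero_of_natDegree_lt hj, gQ_zero]

lemma gQ_mul_natCast (I : Hq) (a : Hq) (n : ℕ) :
    gQ I (a * (n : Hq)) = gQ I a * (n : ℂ) := by
  have h1 : a * (n : Hq) = (n : ℝ) • a := by
    rw [← map_natCast (algebraMap ℝ Hq) n, ← Algebra.commutes, Algebra.smul_def]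
  rw [h1, gQ_smul, mul_comm]
  norm_num

lemma derivative_qPoly (I : Hq) (P : Hq[X]) :
    derivative (qPoly I P) = qPoly I (derivative P) := by
  ext j
  rw [Polynomial.coeff_derivative, coeff_qPoly, coeff_qPoly, Polynomial.coeff_derivative]
  have := gQ_mul_natCast I (P.coeff (j + 1)) (j + 1)
  push_cast at this ⊢
  rw [this]

end Poly

section Lift
variable {I : Hq}

lemma lift_gQ (hII : I * I = -1) (a : Hq) : Complex.liftAux I hII (gQ I a) = piProj I a := by
  rw [Complex.liftAux_apply, piProj, Algebra.algebraMap_eq_smul_one]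
  rfl

lemma lift_mem_Cplane (hII : I * I = -1) (w : ℂ) : Complex.liftAux I hII w ∈ Cplane I :=
  ⟨w.re, w.im, Complex.liftAux_apply I hII w⟩

lemma mem_Cplane_iff_lift (hII : I * I = -1) (x : Hq) : x ∈ Cplane I ↔ ∃ w, x = Complex.liftAux I hII w := by
  constructor
  · rintro ⟨a, b, rfl⟩
    exact ⟨⟨a, b⟩, (Complex.liftAux_apply I hII ⟨a, b⟩).symm⟩
  · rintro ⟨w, rfl⟩
    exact lift_mem_Cplane hII w

lemma lemmaM (hI : I ^ 2 = -1) (hII : I * I = -1) (R : Hq[X]) (w : ℂ) :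
    Complex.liftAux I hII (eval w (qPoly I R)) =
      piProj I (evalQ R (Complex.liftAux I hII w)) := by
  set f := Complex.liftAux I hII with hf
  have h1 : eval w (qPoly I R) =
      ∑ k ∈ Finset.range (R.natDegree + 1), w ^ k * gQ I (R.coeff k) := by
    rw [qPoly, eval_finset_sum]
    exact Finset.sum_congr rfl fun k _ => by rw [eval_mul, eval_C, eval_pow, eval_X, mul_comm]
  have h2 : evalQ R (f w) =
      ∑ k ∈ Finset.range (R.natDegree + 1), (f w) ^ k * R.coeff k :=
    evalQ_range R (f w) _ (lt_add_one _)
  rw [h1, map_sum, h2]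
  rw [show piProj I (∑ k ∈ Finset.range (R.natDegree + 1), (f w) ^ k * R.coeff k)
      = ∑ k ∈ Finset.range (R.natDegree + 1), piProj I ((f w) ^ k * R.coeff k) from
    map_sum (piProjL I) _ _]
  refine Finset.sum_congr rfl fun k _ => ?_
  rw [map_mul, map_pow, lift_gQ hII,
    piProj_mul_left hI (by rw [← map_pow]; exact lift_mem_Cplane hII (w ^ k))]

lemma lemmaA (hI : I ^ 2 = -1) (hII : I * I = -1) (R : Hq[X]) {x : Hq} (hx : x ∈ Cplane I) :
    evalQ (projPoly I R) x = piProj I (evalQ R x) := by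
  obtain ⟨w, rfl⟩ := (mem_Cplane_iff_lift hII x).1 hx
  set f := Complex.liftAux I hII with hf
  rw [evalQ_range (projPoly I R) _ (R.natDegree + 1)
      (lt_of_le_of_lt (natDegree_projPoly_le I R) (lt_add_one _)),
    evalQ_range R _ (R.natDegree + 1) (lt_add_one _)]
  rw [show piProj I (∑ k ∈ Finset.range (R.natDegree + 1), (f w) ^ k * R.coeff k)
      = ∑ k ∈ Finset.range (R.natDegree + 1), piProj I ((f w) ^ k * R.coeff k) from
    map_sum (piProjL I) _ _]
  refine Finset.sum_congr rfl fun k _ => ?_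
  rw [coeff_projPoly,
    piProj_mul_left hI (by rw [← map_pow]; exact lift_mem_Cplane hII (w ^ k))]

end Lift


lemma eval_deriv_multiset_prod (z : ℂ) (s : Multiset ℂ) (h : ∀ r ∈ s, z ≠ r) :
    eval z (derivative (s.map (fun r => X - C r)).prod) =
      eval z ((s.map (fun r => X - C r)).prod) * (s.map (fun r => (z - r)⁻¹)).sum := by
  induction s using Multiset.induction_on with
  | empty => simp
  | cons r s ih =>
    have hz : z - r ≠ 0 := sub_ne_zero.2 (h r (Multiset.mem_cons_self r s))
    have ih' := ih (fun r' hr' => h r' (Multiset.mem_cons_of_mem hr'))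
    simp only [Multiset.map_cons, Multiset.prod_cons, Multiset.sum_cons, derivative_mul,
      derivative_sub, derivative_X, derivative_C, sub_zero, one_mul, eval_add, eval_mul,
      eval_sub, eval_X, eval_C, ih']
    field_simp

lemma gauss_lucas_C (q : ℂ[X]) (hq : 0 < q.natDegree) (z : ℂ)
    (hz : eval z (derivative q) = 0) : z ∈ convexHull ℝ {w : ℂ | eval w q = 0} := by
  by_cases h0 : eval z q = 0
  · exact subset_convexHull ℝ _ h0
  have hq0 : q ≠ 0 := fun h => by simp [h] at hq
  set s := q.roots with hs
  have hsplit : Splits q := IsAlgClosed.splits q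
  have hq_eq : q = C q.leadingCoeff * (s.map (fun a => X - C a)).prod :=
    hsplit.eq_prod_roots
  have hcard : q.natDegree = Multiset.card s := by
    simpa using hsplit.natDegree_eq_card_roots
  have hzr : ∀ r ∈ s, z ≠ r := by
    rintro r hr rfl
    exact h0 ((mem_roots hq0).1 hr)
  -- sum of inverses is zero
  have hS : (s.map (fun r => (z - r)⁻¹)).sum = 0 := by
    have h1 : eval z (derivative q) =
        eval z q * (s.map (fun r => (z - r)⁻¹)).sum := by
      conv_lhs => rw [hq_eq]
      rw [derivative_C_mul, eval_C_mul, eval_deriv_multiset_prod z s hzr]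
      conv_rhs => rw [hq_eq]
      simp [eval_C_mul]; ring
    rw [hz] at h1
    exact (mul_eq_zero.1 h1.symm).resolve_left h0
  -- conjugate
  have hT : (s.map (fun r => (z - r) * ((Complex.normSq (z - r) : ℂ))⁻¹)).sum = 0 := by
    have := congrArg (starRingEnd ℂ) hS
    rw [map_multiset_sum, Multiset.map_map, map_zero] at this
    rw [← this]
    refine congrArg _ (Multiset.map_congr rfl fun r _ => ?_)
    show (z - r) * ((Complex.normSq (z - r) : ℂ))⁻¹ = (starRingEnd ℂ) ((z - r)⁻¹)
    rw [map_inv₀]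
    conv_rhs => rw [Complex.inv_def, Complex.conj_conj, Complex.normSq_conj]
    rw [Complex.ofReal_inv]
  set W : ℂ → ℝ := fun r => (s.count r : ℝ) * (Complex.normSq (z - r))⁻¹ with hW
  have key : ∑ r ∈ s.toFinset, W r • (z - r) = 0 := by
    rw [Finset.sum_multiset_map_count] at hT
    rw [← hT]
    refine Finset.sum_congr rfl fun r hr => ?_
    push_cast [hW, Complex.real_smul, nsmul_eq_mul]
    ring
  have hWnn : ∀ r ∈ s.toFinset, 0 ≤ W r := fun r _ =>
    mul_nonneg (Nat.cast_nonneg _) (inv_nonneg.2 (Complex.normSq_nonneg _))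
  have hs_ne : s ≠ 0 := by
    intro h
    rw [h] at hcard; simp at hcard; omega
  obtain ⟨r0, hr0⟩ := Multiset.exists_mem_of_ne_zero hs_ne
  have hWpos : 0 < ∑ r ∈ s.toFinset, W r := by
    have h1 : 0 < W r0 := by
      have hc : 0 < (s.count r0 : ℝ) := by
        exact_mod_cast Multiset.count_pos.2 hr0
      have hn : 0 < Complex.normSq (z - r0) :=
        Complex.normSq_pos.2 (sub_ne_zero.2 (hzr r0 hr0))
      positivity
    have := Finset.single_le_sum hWnn (Multiset.mem_toFinset.2 hr0)
    linarith
  have hmem : ∀ r ∈ s.toFinset, r ∈ {w : ℂ | eval w q = 0} := fun r hr =>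
    (mem_roots hq0).1 (Multiset.mem_toFinset.1 hr)
  have hcm := Finset.centerMass_mem_convexHull s.toFinset hWnn hWpos hmem (z := id)
  have heq : s.toFinset.centerMass W id = z := by
    rw [Finset.centerMass]
    have h2 : ∑ r ∈ s.toFinset, W r • (r : ℂ) = (∑ r ∈ s.toFinset, W r) • z := by
      have := key
      simp only [smul_sub, Finset.sum_sub_distrib] at this
      rw [← Finset.sum_smul] at this
      linear_combination (norm := module) -this
    rw [show (∑ r ∈ s.toFinset, W r • id r) = ∑ r ∈ s.toFinset, W r • (r:ℂ) from rfl, h2,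
      smul_smul, inv_mul_cancel₀ hWpos.ne', one_smul]
  rwa [heq] at hcm

lemma exists_I (x : Hq) : ∃ I : Hq, I ^ 2 = -1 ∧ x ∈ Cplane I := by
  by_cases h : x.imI = 0 ∧ x.imJ = 0 ∧ x.imK = 0
  · refine ⟨id ⟨0, 1, 0, 0⟩, ?_, x.re, 0, ?_⟩
    · rw [sq, Quaternion.ext_iff]
      rw [Quaternion.re_mul, Quaternion.imI_mul, Quaternion.imJ_mul, Quaternion.imK_mul,
        Quaternion.re_neg, Quaternion.imI_neg, Quaternion.imJ_neg, Quaternion.imK_neg,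
        Quaternion.re_one, Quaternion.imI_one, Quaternion.imJ_one, Quaternion.imK_one]
      simp only [id]
      norm_num
    · rw [Quaternion.ext_iff]
      simp [h.1, h.2.1, h.2.2]
  · set s := Real.sqrt (x.imI ^ 2 + x.imJ ^ 2 + x.imK ^ 2) with hs
    have hsum : 0 < x.imI ^ 2 + x.imJ ^ 2 + x.imK ^ 2 := by
      rcases not_and_or.1 h with h1 | h12
      · positivity
      rcases not_and_or.1 h12 with h2 | h3
      · positivity
      · positivity
    have hspos : 0 < s := Real.sqrt_pos.2 hsum
    have hs2 : s ^ 2 = x.imI ^ 2 + x.imJ ^ 2 + x.imK ^ 2 := Real.sq_sqrt hsum.le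
    refine ⟨id ⟨0, x.imI / s, x.imJ / s, x.imK / s⟩, ?_, x.re, s, ?_⟩
    · rw [sq, Quaternion.ext_iff]
      refine ⟨?_, ?_, ?_, ?_⟩
      · rw [Quaternion.re_mul, Quaternion.re_neg, Quaternion.re_one]; simp only [id]
        field_simp
        nlinarith [hs2]
      · rw [Quaternion.imI_mul, Quaternion.imI_neg, Quaternion.imI_one, neg_zero]; simp only [id]
        ring
      · rw [Quaternion.imJ_mul, Quaternion.imJ_neg, Quaternion.imJ_one, neg_zero]; simp only [id]
        ring
      · rw [Quaternion.imK_mul, Quaternion.imK_neg, Quaternion.imK_one, neg_zero]; simp only [id]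
        ring
    · rw [Quaternion.ext_iff]
      have := hspos.ne'
      refine ⟨by simp [Quaternion.re_smul]; exact Or.inr rfl, ?_, ?_, ?_⟩ <;>
      · simp only [Quaternion.imI_add, Quaternion.imJ_add, Quaternion.imK_add,
          Quaternion.imI_smul, Quaternion.imJ_smul, Quaternion.imK_smul, smul_eq_mul,
          Quaternion.algebraMap_def, Quaternion.imI_coe, Quaternion.imJ_coe,
          Quaternion.imK_coe, zero_add]
        simp only [id]
        field_simp


theorem stmt11 (P : Hq[X]) (hdeg : 2 ≤ P.natDegree) :
    VQ (derivative P) ⊆ snail P := by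
  intro x hx
  have hx' : evalQ (derivative P) x = 0 := hx
  obtain ⟨I, hI, hxC⟩ := exists_I x
  have hII : I * I = -1 := by rw [← sq]; exact hI
  refine Set.mem_biUnion (show I ∈ sphereS from hI) ?_
  by_cases hc : ∃ c, ∀ y ∈ Cplane I, evalQ (projPoly I P) y = c
  · rw [KC, if_pos hc]; exact hxC
  rw [KC, if_neg hc]
  obtain ⟨w, rfl⟩ := (mem_Cplane_iff_lift hII x).1 hxC
  set f := Complex.liftAux I hII with hf
  set q := qPoly I P with hq_def
  have hfinj : Function.Injective f := f.toRingHom.injective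
  have hderiv : eval w (derivative q) = 0 := by
    have h1 := lemmaM hI hII (derivative P) w
    rw [hx', piProj_zero] at h1
    have h0 : f (eval w (qPoly I (derivative P))) = f 0 := by rw [h1, map_zero]
    rw [hq_def, derivative_qPoly]
    exact hfinj h0
  have hq : 0 < q.natDegree := by
    by_contra hq0
    push_neg at hq0
    have hqC : q = C (q.coeff 0) := Polynomial.eq_C_of_natDegree_eq_zero (Nat.le_zero.1 hq0)
    refine hc ⟨f (q.coeff 0), fun y hy => ?_⟩
    obtain ⟨u, rfl⟩ := (mem_Cplane_iff_lift hII y).1 hy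
    rw [lemmaA hI hII P (lift_mem_Cplane hII u), ← lemmaM hI hII P u]
    congr 1
    rw [← hq_def]
    conv_lhs => rw [hqC]
    rw [eval_C]
  have hw := gauss_lucas_C q hq w hderiv
  have himg : f '' (convexHull ℝ {u : ℂ | eval u q = 0}) ⊆
      convexHull ℝ (VQ (projPoly I P) ∩ Cplane I) := by
    have himg0 := LinearMap.image_convexHull f.toLinearMap {u : ℂ | eval u q = 0}
    change f '' _ = convexHull ℝ (f '' _) at himg0
    rw [himg0]
    apply convexHull_mono
    rintro y ⟨u, hu, rfl⟩
    refine ⟨?_, lift_mem_Cplane hII u⟩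
    show evalQ (projPoly I P) (f u) = 0
    rw [lemmaA hI hII P (lift_mem_Cplane hII u), ← lemmaM hI hII P u, ← hq_def,
      show eval u q = 0 from hu, map_zero]
  exact himg ⟨w, hw, rfl⟩


end
end
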